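/- Let A_6 := ⌊1/A_4⌋ and let σ ∈ Φ^*. Then: (1) for every h > A_6 and every ρ ∈ Λ_h(σ), one has |ρ_R| ≥ |σ_R| + 1; (2) for every ρ ∈ Λ_1(σ), one has |ρ_R| − |σ_R| ≤ A_1. -/

import Mathlib

/-
If `ρ ∈ Λ_h(σ)` kept `ρ_R = σ_R`, then `b_{ρ_y} < a_{ρ_L}`, `a_{σ_L} ≤ b_{(σ_y)^-}` and
`a_{ij} ≤ A_3 b_j` would leave `b_j < A_3^h` for the last letter `j` of `σ_y`, so `b̲ < A_3^h`,
i.e. `h ≤ log b̲ / log A_3 = 1/A_4`. Dually, for `ρ ∈ Λ_1(σ)` with `ρ_R = σ_R ∗ v`,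
`a_{ρ_L} ≤ b_{(ρ_y)^-}` and `b_{σ_y} < a_{σ_L}` leave `a̲ < b̄^{|v|}`, i.e. `|v| < A_1`.
-/

open Filter MeasureTheory
open scoped BigOperators ENNReal NNReal Topology

namespace LGQ

noncomputable section

/-- The alphabet `G = {(i,j) : 1 ≤ i ≤ n_j, 1 ≤ j ≤ m}`, encoded as a sigma type:
an element is `⟨j, i⟩` with `j : Fin m` (the `y`-coordinate) and `i : Fin (n j)`. -/
abbrev Alph (m : ℕ) (n : Fin m → ℕ) := Σ j : Fin m, Fin (n j)

/-- A pair `σ = (σ_L, σ_R)` with `σ_L ∈ G^*` and `σ_R ∈ G_y^*`. -/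
abbrev Wd (m : ℕ) (n : Fin m → ℕ) := List (Alph m n) × List (Fin m)

variable {m : ℕ} {n : Fin m → ℕ}

/-- `a_ω := ∏ a_{i_h j_h}` along a word `ω ∈ G^*`. -/
def aP (a : Alph m n → ℝ) (w : List (Alph m n)) : ℝ := (w.map a).prod

/-- `b_τ := ∏ b_{j_h}` along a word `τ ∈ G_y^*`. -/
def bP (b : Fin m → ℝ) (τ : List (Fin m)) : ℝ := (τ.map b).prod

/-- `σ_y := (σ_L)_y ∗ σ_R` : the `y`-word of a pair `σ = σ_L ∗ σ_R`. -/
def sy (σ : Wd m n) : List (Fin m) := σ.1.map Sigma.fst ++ σ.2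

/-- `Ψ_l := {σ = σ_L ∗ σ_R : σ_L ∈ G^l, σ_R ∈ G_y^*, b_{(σ_y)^-} ≥ a_{σ_L} > b_{σ_y}}`. -/
def Psi (a : Alph m n → ℝ) (b : Fin m → ℝ) (l : ℕ) : Set (Wd m n) :=
  {σ | σ.1.length = l ∧ 1 ≤ σ.2.length ∧
    aP a σ.1 ≤ bP b (sy σ).dropLast ∧ bP b (sy σ) < aP a σ.1}

/-- `Ψ^* := ⋃_{l ≥ 1} Ψ_l`. -/
def PsiStar (a : Alph m n → ℝ) (b : Fin m → ℝ) : Set (Wd m n) :=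
  {σ | ∃ l, 1 ≤ l ∧ σ ∈ Psi a b l}

/-- `q_j := Σ_{i=1}^{n_j} p_{ij}`. -/
def qf (p : Alph m n → ℝ) (j : Fin m) : ℝ := ∑ i : Fin (n j), p ⟨j, i⟩

/-- `p_{σ_L} := ∏ p_{i_h j_h}`. -/
def pP (p : Alph m n → ℝ) (w : List (Alph m n)) : ℝ := (w.map p).prod

/-- `q_{σ_R} := ∏ q_{j_h}`. -/
def qP (p : Alph m n → ℝ) (τ : List (Fin m)) : ℝ := (τ.map (qf p)).prod

/-- `E_r(σ) := p_{σ_L} q_{σ_R} a_{σ_L}^r` (note `E_r(θ) = 1`). -/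
def Er (a p : Alph m n → ℝ) (r : ℝ) (σ : Wd m n) : ℝ :=
  pP p σ.1 * qP p σ.2 * aP a σ.1 ^ r

/-- `a̲ := min a_{ij}`. -/
def aLo (a : Alph m n → ℝ) : ℝ := ⨅ g, a g

/-- `ā := max a_{ij}`. -/
def aHi (a : Alph m n → ℝ) : ℝ := ⨆ g, a g

/-- `b̲ := min b_j`. -/
def bLo (b : Fin m → ℝ) : ℝ := ⨅ j, b j

/-- `b̄ := max b_j`. -/
def bHi (b : Fin m → ℝ) : ℝ := ⨆ j, b j

/-- `p̲ := min p_{ij}`. -/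
def pLo (p : Alph m n → ℝ) : ℝ := ⨅ g, p g

/-- `q̲ := min q_j`. -/
def qLo (p : Alph m n → ℝ) : ℝ := ⨅ j, qf p j

/-- `A_1 := ⌊log a̲ / log b̄⌋ + 1`. -/
def A1 (a : Alph m n → ℝ) (b : Fin m → ℝ) : ℤ :=
  ⌊Real.log (aLo a) / Real.log (bHi b)⌋ + 1

/-- `A_2 := ⌊log b̲ / log ā⌋ + 1`. -/
def A2 (a : Alph m n → ℝ) (b : Fin m → ℝ) : ℤ :=
  ⌊Real.log (bLo b) / Real.log (aHi a)⌋ + 1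

/-- `A_3 := max_{(i,j)∈G} a_{ij}/b_j`. -/
def A3 (a : Alph m n → ℝ) (b : Fin m → ℝ) : ℝ := ⨆ g : Alph m n, a g / b g.1

/-- `A_4 := log A_3 / log b̲`. -/
def A4 (a : Alph m n → ℝ) (b : Fin m → ℝ) : ℝ := Real.log (A3 a b) / Real.log (bLo b)

/-- `A_6 := ⌊1/A_4⌋`. -/
def A6 (a : Alph m n → ℝ) (b : Fin m → ℝ) : ℤ := ⌊1 / A4 a b⌋

/-- `η̲_r := p̲ q̲^{A_1} a̲^r`. -/
def etaLo (a : Alph m n → ℝ) (b : Fin m → ℝ) (p : Alph m n → ℝ) (r : ℝ) : ℝ :=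
  pLo p * qLo p ^ A1 a b * aLo a ^ r

/-- `A_{5,r} := ⌊log(q̲² η̲_r)/(r·log ā)⌋`. -/
def A5 (a : Alph m n → ℝ) (b : Fin m → ℝ) (p : Alph m n → ℝ) (r : ℝ) : ℤ :=
  ⌊Real.log (qLo p ^ 2 * etaLo a b p r) / (r * Real.log (aHi a))⌋

/-- `T_{1,r} := ⌊(A_1 + A_{5,r} + 3)/A_4⌋`. -/
def T1 (a : Alph m n → ℝ) (b : Fin m → ℝ) (p : Alph m n → ℝ) (r : ℝ) : ℤ :=
  ⌊((A1 a b + A5 a b p r + 3 : ℤ) : ℝ) / A4 a b⌋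

/-- `ρ = σ^♭`:  for `σ ∈ Ψ_1`, `σ^♭ = θ`; for `σ ∈ Ψ_l` with `l ≥ 2`, `σ^♭` is the unique
`ρ ∈ Ψ_{l-1}` with `ρ_L = (σ_L)^-` and `ρ_y` an initial segment of `σ_y`. -/
def IsFlat (a : Alph m n → ℝ) (b : Fin m → ℝ) (σ ρ : Wd m n) : Prop :=
  (σ.1.length = 1 ∧ ρ = (([], []) : Wd m n)) ∨
  (2 ≤ σ.1.length ∧ ρ ∈ Psi a b (σ.1.length - 1) ∧ ρ.1 = σ.1.dropLast ∧ sy ρ <+: sy σ)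

/-- `Λ_{n,r} := {σ ∈ Ψ^* : E_r(σ^♭) ≥ η̲_r^n > E_r(σ)}`. -/
def Lam (a : Alph m n → ℝ) (b : Fin m → ℝ) (p : Alph m n → ℝ) (r : ℝ) (N : ℕ) :
    Set (Wd m n) :=
  {σ | σ ∈ PsiStar a b ∧ ∃ ρ : Wd m n, IsFlat a b σ ρ ∧
    etaLo a b p r ^ N ≤ Er a p r ρ ∧ Er a p r σ < etaLo a b p r ^ N}

/-- `S_{n,r} := {σ ∈ Ψ^* : η̲_r^{n+1} ≤ E_r(σ) < η̲_r^n}`. -/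
def Snr (a : Alph m n → ℝ) (b : Fin m → ℝ) (p : Alph m n → ℝ) (r : ℝ) (N : ℕ) :
    Set (Wd m n) :=
  {σ | σ ∈ PsiStar a b ∧ etaLo a b p r ^ (N + 1) ≤ Er a p r σ ∧
    Er a p r σ < etaLo a b p r ^ N}

/-- `G_1(σ) := {ω ∈ S_{n,r} : σ_L ⪯ ω_L and σ_y ⪯ ω_y}`. -/
def G1 (a : Alph m n → ℝ) (b : Fin m → ℝ) (p : Alph m n → ℝ) (r : ℝ) (N : ℕ)
    (σ : Wd m n) : Set (Wd m n) :=
  {ω | ω ∈ Snr a b p r N ∧ σ.1 <+: ω.1 ∧ sy σ <+: sy ω}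

/-- `Λ_h(σ) := {ρ ∈ Φ_{l+h} : σ ⪯ ρ}` (componentwise order on pairs). -/
def LamH (a : Alph m n → ℝ) (b : Fin m → ℝ) (σ : Wd m n) (h : ℕ) : Set (Wd m n) :=
  {ρ | ρ ∈ Psi a b (σ.1.length + h) ∧ σ.1 <+: ρ.1 ∧ σ.2 <+: ρ.2}

/-- `I_{k,r}(t) := Σ_{ω∈Φ_k} E_r(ω)^t`. -/
def Ih (a : Alph m n → ℝ) (b : Fin m → ℝ) (p : Alph m n → ℝ) (r : ℝ) (k : ℕ) (t : ℝ) : ℝ :=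
  ∑' ω : Psi a b k, Er a p r ω.1 ^ t

/-- `Υ_n(t,s) := Σ_{σ∈Ψ_n} (p_{σ_L} q_{σ_R})^t a_{σ_L}^s`. -/
def Ups (a : Alph m n → ℝ) (b : Fin m → ℝ) (p : Alph m n → ℝ) (N : ℕ) (t s : ℝ) : ℝ :=
  ∑' σ : Psi a b N, (pP p σ.1.1 * qP p σ.1.2) ^ t * aP a σ.1.1 ^ s

/-- `τ_0 := ((1,j_0),(n_{j_0},j_0))`. -/
def tau0 (j0 : Fin m) (h : 2 ≤ n j0) : List (Alph m n) :=
  [⟨j0, ⟨0, by omega⟩⟩, ⟨j0, ⟨n j0 - 1, by omega⟩⟩]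

/-- `σ̄` is a bar-extension of `σ ∈ Ψ_l`: `σ̄ ∈ Ψ_{l+2}`, `σ̄_L = σ_L ∗ τ_0`, `σ_R ⪯ σ̄_R`. -/
def BarExt (a : Alph m n → ℝ) (b : Fin m → ℝ) (j0 : Fin m) (h : 2 ≤ n j0)
    (σ σb : Wd m n) : Prop :=
  σb ∈ Psi a b (σ.1.length + 2) ∧ σb.1 = σ.1 ++ tau0 j0 h ∧ σ.2 <+: σb.2

/-- cylinder set `[σ] ⊆ Φ_∞ = G^ℕ × G_y^ℕ`. -/
def Cyl (σ : Wd m n) : Set ((ℕ → Alph m n) × (ℕ → Fin m)) :=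
  {x | (∀ i : ℕ, ∀ hi : i < σ.1.length, x.1 i = σ.1.get ⟨i, hi⟩) ∧
       (∀ i : ℕ, ∀ hi : i < σ.2.length, x.2 i = σ.2.get ⟨i, hi⟩)}

/-- the affine map `f_{ij}(x,y) = (a_{ij} x + c_{ij}, b_j y + d_j)`. -/
def fmap (a : Alph m n → ℝ) (b : Fin m → ℝ) (c : Alph m n → ℝ) (d : Fin m → ℝ)
    (g : Alph m n) : ℝ × ℝ → ℝ × ℝ :=
  fun x => (a g * x.1 + c g, b g.1 * x.2 + d g.1)

/-- `A_{L,σ} = c_{i_1j_1} + Σ_{p≥2} (∏_{h<p} a_{i_hj_h}) c_{i_pj_p}`. -/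
def xL (a c : Alph m n → ℝ) : List (Alph m n) → ℝ
  | [] => 0
  | g :: w => c g + a g * xL a c w

/-- `B_{L,σ} = d_{j_1} + Σ_{p≥2} (∏_{h<p} b_{j_h}) d_{j_p}`. -/
def yL (b d : Fin m → ℝ) : List (Fin m) → ℝ
  | [] => 0
  | j :: τ => d j + b j * yL b d τ

/-- the approximate square `F_σ = [A_{L,σ}, A_{L,σ}+a_{σ_L}] × [B_{L,σ}, B_{L,σ}+b_{σ_y}]`. -/
def Fsq (a c : Alph m n → ℝ) (b d : Fin m → ℝ) (σ : Wd m n) : Set (ℝ × ℝ) :=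
  Set.Icc (xL a c σ.1) (xL a c σ.1 + aP a σ.1) ×ˢ
    Set.Icc (yL b d (sy σ)) (yL b d (sy σ) + bP b (sy σ))

/-- the Euclidean distance on `ℝ²`. -/
def eudist (x y : ℝ × ℝ) : ℝ := Real.sqrt ((x.1 - y.1) ^ 2 + (x.2 - y.2) ^ 2)

/-- the horizontal distance `d_h(S,T) = inf{|x-x'| : (x,y)∈S, (x',y')∈T}`. -/
def dH (S T : Set (ℝ × ℝ)) : ℝ := sInf {e | ∃ x ∈ S, ∃ y ∈ T, e = |x.1 - y.1|}

/-- the (Euclidean) diameter of a subset of `ℝ²`. -/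
def euDiam (S : Set (ℝ × ℝ)) : ℝ := sSup {e | ∃ x ∈ S, ∃ y ∈ S, e = eudist x y}

/-- the `N`-th quantization error of order `r`. -/
def qerr (μ : Measure (ℝ × ℝ)) (r : ℝ) (N : ℕ) : ℝ :=
  sInf {e : ℝ | ∃ α : Finset (ℝ × ℝ), ∃ hα : α.Nonempty, α.card ≤ N ∧
    e = (∫ x, α.inf' hα (fun y => eudist x y ^ r) ∂μ) ^ (1 / r)}

/-- the topological support of a measure on `ℝ²`. -/
def suppSet (μ : Measure (ℝ × ℝ)) : Set (ℝ × ℝ) :=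
  {x | ∀ U : Set (ℝ × ℝ), IsOpen U → x ∈ U → μ U ≠ 0}

/-- the dyadic square `[k 2^{-N}, (k+1) 2^{-N}) × [k' 2^{-N}, (k'+1) 2^{-N})`. -/
def Dy (N : ℕ) (k : ℤ × ℤ) : Set (ℝ × ℝ) :=
  Set.Ico ((k.1 : ℝ) * (2 : ℝ) ^ (-(N : ℤ))) (((k.1 : ℝ) + 1) * (2 : ℝ) ^ (-(N : ℤ))) ×ˢ
    Set.Ico ((k.2 : ℝ) * (2 : ℝ) ^ (-(N : ℤ))) (((k.2 : ℝ) + 1) * (2 : ℝ) ^ (-(N : ℤ)))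


section Words

variable {a : Alph m n → ℝ} {b : Fin m → ℝ}

@[simp] lemma aP_append (u v : List (Alph m n)) : aP a (u ++ v) = aP a u * aP a v := by
  simp [aP]

@[simp] lemma bP_append (u v : List (Fin m)) : bP b (u ++ v) = bP b u * bP b v := by
  simp [bP]

@[simp] lemma aP_singleton (g : Alph m n) : aP a [g] = a g := by simp [aP]

@[simp] lemma bP_singleton (j : Fin m) : bP b [j] = b j := by simp [bP]

lemma bP_cons (j : Fin m) (τ : List (Fin m)) : bP b (j :: τ) = b j * bP b τ := by simp [bP]

lemma bP_sy (σ : Wd m n) : bP b (sy σ) = bP b (σ.1.map Sigma.fst) * bP b σ.2 := by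
  simp [sy]

lemma aP_pos (ha : ∀ g, 0 < a g) (w : List (Alph m n)) : 0 < aP a w :=
  List.prod_pos fun _ hx => by obtain ⟨g, -, rfl⟩ := List.mem_map.mp hx; exact ha g

lemma bP_pos (hb : ∀ j, 0 < b j) (τ : List (Fin m)) : 0 < bP b τ :=
  List.prod_pos fun _ hx => by obtain ⟨j, -, rfl⟩ := List.mem_map.mp hx; exact hb j

lemma bP_le_pow_length (hb : ∀ j, 0 < b j) {C : ℝ} (hC : ∀ j, b j ≤ C) (τ : List (Fin m)) :
    bP b τ ≤ C ^ τ.length := by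
  simpa [bP] using List.prod_map_le_prod_map₀ b (fun _ => C) (fun j _ => (hb j).le)
    (fun j _ => hC j)

lemma aP_le_pow_length_mul_bP (ha : ∀ g, 0 < a g) {C : ℝ} (hC : ∀ g, a g ≤ C * b g.1)
    (w : List (Alph m n)) : aP a w ≤ C ^ w.length * bP b (w.map Sigma.fst) := by
  simpa [aP, bP, List.prod_map_mul, Function.comp_def] using
    List.prod_map_le_prod_map₀ a (fun g => C * b g.1) (fun g _ => (ha g).le) (fun g _ => hC g)

end Words

section Constants

variable {a : Alph m n → ℝ} {b : Fin m → ℝ}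

lemma aLo_le (g : Alph m n) : aLo a ≤ a g := ciInf_le (Finite.bddBelow_range a) g

lemma aLo_pos [Nonempty (Alph m n)] (ha : ∀ g, 0 < a g) : 0 < aLo a := by
  obtain ⟨g, hg⟩ := exists_eq_ciInf_of_finite (f := a)
  rw [aLo, ← hg]
  exact ha g

lemma bLo_le (j : Fin m) : bLo b ≤ b j := ciInf_le (Finite.bddBelow_range b) j

lemma bLo_pos [Nonempty (Fin m)] (hb : ∀ j, 0 < b j) : 0 < bLo b := by
  obtain ⟨j, hj⟩ := exists_eq_ciInf_of_finite (f := b)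
  rw [bLo, ← hj]
  exact hb j

lemma le_bHi (j : Fin m) : b j ≤ bHi b := le_ciSup (Finite.bddAbove_range b) j

lemma bHi_lt_one [Nonempty (Fin m)] (hb : ∀ j, b j < 1) : bHi b < 1 := by
  obtain ⟨j, hj⟩ := exists_eq_ciSup_of_finite (f := b)
  rw [bHi, ← hj]
  exact hb j

lemma le_A3_mul (hb : ∀ j, 0 < b j) (g : Alph m n) : a g ≤ A3 a b * b g.1 :=
  (div_le_iff₀ (hb g.1)).mp <|
    le_ciSup (Finite.bddAbove_range fun g : Alph m n => a g / b g.1) g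

lemma A3_pos [Nonempty (Alph m n)] (ha : ∀ g, 0 < a g) (hb : ∀ j, 0 < b j) : 0 < A3 a b := by
  obtain ⟨g, hg⟩ := exists_eq_ciSup_of_finite (f := fun g : Alph m n => a g / b g.1)
  rw [A3, ← hg]
  exact div_pos (ha g) (hb g.1)

lemma A3_lt_one [Nonempty (Alph m n)] (hb : ∀ j, 0 < b j) (hab : ∀ g : Alph m n, a g < b g.1) :
    A3 a b < 1 := by
  obtain ⟨g, hg⟩ := exists_eq_ciSup_of_finite (f := fun g : Alph m n => a g / b g.1)
  rw [A3, ← hg]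
  exact (div_lt_one (hb g.1)).mpr (hab g)

lemma A6_eq_floor_log_div_log : A6 a b = ⌊Real.log (bLo b) / Real.log (A3 a b)⌋ := by
  rw [A6, A4, one_div_div]

end Constants

lemma natCast_le_floor_log_div_log {x y : ℝ} {k : ℕ} (hx : 0 < x) (hy₀ : 0 < y) (hy₁ : y < 1)
    (h : x < y ^ k) : (k : ℤ) ≤ ⌊Real.log x / Real.log y⌋ := by
  have hlog : Real.log x < k * Real.log y := Real.log_pow y k ▸ Real.log_lt_log hx h
  exact Int.le_floor.mpr <| by
    exact_mod_cast (le_div_iff_of_neg (Real.log_neg hy₀ hy₁)).mpr hlog.le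

section Extensions

variable {a : Alph m n → ℝ} {b : Fin m → ℝ}

lemma getLast_sy_lt_pow_of_extend_left (ha : ∀ g, 0 < a g) (hb : ∀ j, 0 < b j) {C : ℝ}
    (hC₀ : 0 ≤ C) (hC : ∀ g, a g ≤ C * b g.1) {σ : Wd m n} (hne : sy σ ≠ [])
    (hσ : aP a σ.1 ≤ bP b (sy σ).dropLast) {u : List (Alph m n)}
    (hρ : bP b (sy (σ.1 ++ u, σ.2)) < aP a (σ.1 ++ u)) :
    b ((sy σ).getLast hne) < C ^ u.length := by
  set P := bP b (sy σ).dropLast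
  set X := bP b (u.map Sigma.fst)
  have hsy : bP b (sy (σ.1 ++ u, σ.2)) = P * b ((sy σ).getLast hne) * X := by
    have hsplit : bP b (sy σ) = P * b ((sy σ).getLast hne) := by
      conv_lhs => rw [← List.dropLast_append_getLast hne]
      rw [bP_append, bP_singleton]
    rw [bP_sy, List.map_append, bP_append, ← hsplit, bP_sy]
    ring
  have hX : 0 < X := bP_pos hb _
  have hP : 0 < P := bP_pos hb _
  have key : P * b ((sy σ).getLast hne) * X < P * C ^ u.length * X :=
    calc P * b ((sy σ).getLast hne) * X
        < aP a σ.1 * aP a u := by rw [← hsy, ← aP_append]; exact hρ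
      _ ≤ aP a σ.1 * (C ^ u.length * X) :=
        mul_le_mul_of_nonneg_left (aP_le_pow_length_mul_bP ha hC u) (aP_pos ha _).le
      _ ≤ P * (C ^ u.length * X) := by gcongr
      _ = P * C ^ u.length * X := by ring
  exact lt_of_mul_lt_mul_left (lt_of_mul_lt_mul_right key hX.le) hP.le

lemma lt_mul_bP_dropLast_of_extend (ha : ∀ g, 0 < a g) (hb : ∀ j, 0 < b j) {σ : Wd m n}
    (hσ : bP b (sy σ) < aP a σ.1) {g : Alph m n} {v : List (Fin m)} (hv : v ≠ [])
    (hρ : aP a (σ.1 ++ [g]) ≤ bP b (sy (σ.1 ++ [g], σ.2 ++ v)).dropLast) :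
    a g < b g.1 * bP b v.dropLast := by
  have hdrop : bP b (sy (σ.1 ++ [g], σ.2 ++ v)).dropLast
      = bP b (sy σ) * (b g.1 * bP b v.dropLast) := by
    have hsy : sy (σ.1 ++ [g], σ.2 ++ v) = (σ.1.map Sigma.fst ++ [g.1] ++ σ.2) ++ v := by
      simp [sy]
    rw [hsy, List.dropLast_append_of_ne_nil hv, bP_sy]
    simp only [bP_append, bP_singleton]
    ring
  have key : aP a σ.1 * a g < aP a σ.1 * (b g.1 * bP b v.dropLast) :=
    calc aP a σ.1 * a g ≤ bP b (sy σ) * (b g.1 * bP b v.dropLast) := by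
          rw [← hdrop, ← aP_singleton (a := a) g, ← aP_append]; exact hρ
      _ < aP a σ.1 * (b g.1 * bP b v.dropLast) :=
          mul_lt_mul_of_pos_right hσ (mul_pos (hb g.1) (bP_pos hb _))
  exact lt_of_mul_lt_mul_left key (aP_pos ha _).le

lemma nonempty_alph_of_mem_PsiStar {σ : Wd m n} (hσ : σ ∈ PsiStar a b) : Nonempty (Alph m n) := by
  obtain ⟨l, hl, hσL, -⟩ := hσ
  obtain ⟨g, -⟩ := List.exists_mem_of_length_pos (l := σ.1) (by omega)
  exact ⟨g⟩

variable [Nonempty (Alph m n)]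

lemma length_add_one_le_of_mem_LamH (hab : ∀ g : Alph m n, 0 < a g ∧ a g < b g.1)
    (hb : ∀ j, 0 < b j) {σ : Wd m n} (hσ : σ ∈ PsiStar a b) {h : ℕ} (hh : A6 a b < h)
    {ρ : Wd m n} (hρ : ρ ∈ LamH a b σ h) : σ.2.length + 1 ≤ ρ.2.length := by
  have : Nonempty (Fin m) := .map Sigma.fst ‹_›
  obtain ⟨l, hl, hσL, -, hσ_le, -⟩ := hσ
  obtain ⟨ρL, ρR⟩ := ρ
  obtain ⟨⟨hρL, -, -, hρ_lt⟩, ⟨u, rfl⟩, hR⟩ := hρ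
  by_contra! hlen
  obtain rfl : σ.2 = ρR := hR.eq_of_length (le_antisymm hR.length_le (by omega))
  have hu : u.length = h := by simp only [List.length_append] at hρL; omega
  have hne : sy σ ≠ [] :=
    List.length_pos_iff.mp (by rw [sy, List.length_append, List.length_map]; omega)
  have ha := fun g => (hab g).1
  have hA3₀ := A3_pos ha hb
  have hlast := getLast_sy_lt_pow_of_extend_left ha hb hA3₀.le (le_A3_mul hb) hne hσ_le hρ_lt
  have : (h : ℤ) ≤ A6 a b := by
    rw [A6_eq_floor_log_div_log, ← hu]
    exact natCast_le_floor_log_div_log (bLo_pos hb) hA3₀ (A3_lt_one hb fun g => (hab g).2)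
      ((bLo_le _).trans_lt hlast)
  omega

lemma length_sub_le_A1_of_mem_LamH (hab : ∀ g : Alph m n, 0 < a g ∧ a g < b g.1)
    (hb : ∀ j, 0 < b j ∧ b j < 1) {σ : Wd m n} (hσ : σ ∈ PsiStar a b) {ρ : Wd m n}
    (hρ : ρ ∈ LamH a b σ 1) : (ρ.2.length : ℤ) - σ.2.length ≤ A1 a b := by
  have : Nonempty (Fin m) := .map Sigma.fst ‹_›
  obtain ⟨l, -, -, -, -, hσ_lt⟩ := hσ
  obtain ⟨ρL, ρR⟩ := ρ
  obtain ⟨⟨hρL, -, hρ_le, -⟩, ⟨u, rfl⟩, ⟨v, rfl⟩⟩ := hρ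
  obtain ⟨g, rfl⟩ : ∃ g, u = [g] :=
    List.length_eq_one_iff.mp (by simp only [List.length_append] at hρL; omega)
  have ha := fun g => (hab g).1
  have hb₀ := fun j => (hb j).1
  have hpow : aLo a < bHi b ^ v.length := by
    rcases eq_or_ne v [] with rfl | hv
    · simpa using (aLo_le g).trans_lt ((hab g).2.trans (hb g.1).2)
    · calc aLo a ≤ a g := aLo_le g
        _ < b g.1 * bP b v.dropLast := lt_mul_bP_dropLast_of_extend ha hb₀ hσ_lt hv hρ_le
        _ = bP b (g.1 :: v.dropLast) := (bP_cons _ _).symm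
        _ ≤ bHi b ^ (g.1 :: v.dropLast).length := bP_le_pow_length hb₀ le_bHi _
        _ = bHi b ^ v.length := by
          rw [List.length_cons, List.length_dropLast,
            Nat.sub_add_cancel (List.length_pos_iff.mpr hv)]
  have hbHi₀ : 0 < bHi b := (hb₀ (Classical.arbitrary _)).trans_le (le_bHi _)
  have := natCast_le_floor_log_div_log (aLo_pos ha) hbHi₀ (bHi_lt_one fun j => (hb j).2) hpow
  simp only [List.length_append, A1]
  omega

end Extensions

theorem stmt11_general
    (m : ℕ) (n : Fin m → ℕ) (hn : ∀ j, 1 ≤ n j)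
    (a : Alph m n → ℝ) (b : Fin m → ℝ)
    (hab : ∀ g : Alph m n, 0 < a g ∧ a g < b g.1 ∧ b g.1 < 1)
    (σ : Wd m n) (hσ : σ ∈ PsiStar a b) :
    (∀ h : ℕ, A6 a b < (h : ℤ) → ∀ ρ ∈ LamH a b σ h, σ.2.length + 1 ≤ ρ.2.length) ∧
    (∀ ρ ∈ LamH a b σ 1, (ρ.2.length : ℤ) - (σ.2.length : ℤ) ≤ A1 a b) := by
  have := nonempty_alph_of_mem_PsiStar hσ
  have hab' : ∀ g : Alph m n, 0 < a g ∧ a g < b g.1 := fun g => ⟨(hab g).1, (hab g).2.1⟩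
  -- `n j ≥ 1` provides an `a_{ij}` below `b j`
  have hb : ∀ j, 0 < b j ∧ b j < 1 := fun j =>
    have hg := hab ⟨j, ⟨0, hn j⟩⟩
    ⟨hg.1.trans hg.2.1, hg.2.2⟩
  exact ⟨fun h hh ρ hρ => length_add_one_le_of_mem_LamH hab' (fun j => (hb j).1) hσ hh hρ,
    fun ρ hρ => length_sub_le_A1_of_mem_LamH hab' hb hσ hρ⟩

theorem stmt11
    (m : ℕ) (hm : 2 ≤ m) (n : Fin m → ℕ) (hn : ∀ j, 1 ≤ n j)
    (a : Alph m n → ℝ) (b : Fin m → ℝ)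
    (hab : ∀ g : Alph m n, 0 < a g ∧ a g < b g.1 ∧ b g.1 < 1)
    (σ : Wd m n) (hσ : σ ∈ PsiStar a b) :
    (∀ h : ℕ, A6 a b < (h : ℤ) → ∀ ρ ∈ LamH a b σ h, σ.2.length + 1 ≤ ρ.2.length) ∧
    (∀ ρ ∈ LamH a b σ 1, (ρ.2.length : ℤ) - (σ.2.length : ℤ) ≤ A1 a b) :=
  stmt11_general m n hn a b hab σ hσ

end

end LGQ
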